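/- arXiv:1405.5997 — 2 statements merged into one kernel-verified Lean document; each statement's English description precedes it below -/
import Mathlib

section
/- Let K ≥ 1 be an integer and let ρ ∈ [1 − 2^{−K/2}, 1]. Then the unique two-choice profile for (ρ, K) satisfies P(ρ, K) = (1 − ν_{ρ,K}(1)) + ν_{ρ,K}(K) ≤ 4 √K · 2^{−K/2}. -/
open Finset Real

noncomputable section

/-- Extend a vector `v = (v_0, …, v_K) ∈ ℝ^{K+1}` to `ℕ → ℝ` by zero,
implementing the convention `v_{K+1} = 0`. -/
def extProfile (K : ℕ) (v : Fin (K + 1) → ℝ) : ℕ → ℝ :=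
  fun k => if h : k < K + 1 then v ⟨k, h⟩ else 0

/-- `v = (v_0, …, v_K)` is a two-choice profile for `(ρ, K)`:
`1 = v_0 ≥ v_1 ≥ … ≥ v_K ≥ 0` and, with the convention `v_{K+1} = 0`,
`v_k − v_{k+1} = ρ (v_{k−1}² − v_k²)` for every `1 ≤ k ≤ K`. -/
def IsTwoChoiceProfile (ρ : ℝ) (K : ℕ) (v : Fin (K + 1) → ℝ) : Prop :=
  extProfile K v 0 = 1 ∧
  (∀ k < K, extProfile K v (k + 1) ≤ extProfile K v k) ∧
  0 ≤ extProfile K v K ∧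
  ∀ k, 1 ≤ k → k ≤ K →
    extProfile K v k - extProfile K v (k + 1) =
      ρ * ((extProfile K v (k - 1)) ^ 2 - (extProfile K v k) ^ 2)

/-- When it exists, the unique two-choice profile for `(ρ, K)`, denoted `ν_{ρ,K}`. -/
def nu (ρ : ℝ) (K : ℕ) : Fin (K + 1) → ℝ :=
  Classical.epsilon (IsTwoChoiceProfile ρ K)

/-- `ν_{ρ,K}` viewed as a function on `ℕ` (with `ν_{ρ,K}(K+1) = 0`). -/
def nuV (ρ : ℝ) (K : ℕ) : ℕ → ℝ := extProfile K (nu ρ K)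

/-- `P(ρ, K) = (1 − ν_{ρ,K}(1)) + ν_{ρ,K}(K)`, the limiting proportion of
problematic (empty or full) queues. -/
def propProblematic (ρ : ℝ) (K : ℕ) : ℝ := (1 - nuV ρ K 1) + nuV ρ K K

/-!
Write `t = v_K` and `ε = 2^{-K/2}`. Summing the balance equations from `k + 1` to `K` gives
`v_{k+1} = ρ (v_k² - t²)`; in particular `1 - v_1 = 1 - ρ + ρ t² ≤ ε + t²`, and, as `ρ ≤ 1`,
`v_{k+1} ≤ v_k²`. Iterating, `t ≤ v_1^{2^{K-1}} ≤ (1 - t²)^{2^{K-1}} ≤ exp(-2^{K-1} t²)`.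
If `t > √K ε`, the right side is below `exp(-K/2) ≤ ε`, which is absurd; so `t ≤ √K ε ≤ 1`
and `P ≤ ε + t² + t ≤ 3 √K ε`.
-/

theorem le_of_le_exp_neg_mul_sq {t c n : ℝ} (ht : t ≤ exp (-(n * t ^ 2))) (hn : 0 ≤ n)
    (hc : 0 ≤ c) (hc_exp : exp (-(n * c ^ 2)) ≤ c) : t ≤ c := by
  by_contra! hct
  have hsq : c ^ 2 ≤ t ^ 2 := pow_le_pow_left₀ hc hct.le 2
  have : exp (-(n * t ^ 2)) ≤ exp (-(n * c ^ 2)) := by gcongr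
  linarith

theorem sq_two_rpow_neg_half (K : ℕ) : ((2 : ℝ) ^ (-(K : ℝ) / 2)) ^ 2 = ((2 : ℝ) ^ K)⁻¹ := by
  rw [← rpow_natCast, ← rpow_mul zero_le_two, Nat.cast_ofNat,
    show -(K : ℝ) / 2 * 2 = -K by ring, rpow_neg zero_le_two, rpow_natCast]

theorem exp_neg_half_le_two_rpow_neg_half {x : ℝ} (hx : 0 ≤ x) :
    exp (-x / 2) ≤ (2 : ℝ) ^ (-x / 2) := by
  rw [rpow_def_of_pos two_pos]
  gcongr
  nlinarith [log_two_lt_d9]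

theorem sqrt_mul_two_rpow_neg_half_le_one (K : ℕ) : √K * (2 : ℝ) ^ (-(K : ℝ) / 2) ≤ 1 := by
  refine (pow_le_one_iff_of_nonneg (by positivity) two_ne_zero).mp ?_
  rw [mul_pow, sq_two_rpow_neg_half, sq_sqrt K.cast_nonneg, ← div_eq_mul_inv,
    div_le_one (by positivity)]
  exact_mod_cast K.lt_two_pow_self.le

namespace IsTwoChoiceProfile

variable {ρ : ℝ} {K : ℕ} {v : Fin (K + 1) → ℝ}

theorem extProfile_antitone (hv : IsTwoChoiceProfile ρ K v) : Antitone (extProfile K v) := by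
  refine antitone_nat_of_succ_le fun k => ?_
  rcases lt_trichotomy k K with hk | rfl | hk
  · exact hv.2.1 k hk
  · simpa [extProfile] using hv.2.2.1
  · simp [extProfile, show ¬k < K + 1 by omega, show ¬k + 1 < K + 1 by omega]

theorem extProfile_nonneg (hv : IsTwoChoiceProfile ρ K v) (k : ℕ) : 0 ≤ extProfile K v k := by
  have hzero : extProfile K v (k + (K + 1)) = 0 := dif_neg (by omega)
  exact hzero ▸ hv.extProfile_antitone (Nat.le_add_right k (K + 1))

theorem extProfile_succ_eq (hv : IsTwoChoiceProfile ρ K v) {k : ℕ} (hk : k ≤ K) :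
    extProfile K v (k + 1) = ρ * (extProfile K v k ^ 2 - extProfile K v K ^ 2) := by
  induction hk using Nat.decreasingInduction with
  | self => simp [extProfile]
  | of_succ k hk ih =>
    have hrec := hv.2.2.2 (k + 1) (by omega) hk
    rw [Nat.add_sub_cancel] at hrec
    linear_combination hrec + ih

theorem extProfile_one_eq (hv : IsTwoChoiceProfile ρ K v) :
    extProfile K v 1 = ρ * (1 - extProfile K v K ^ 2) := by
  rw [hv.extProfile_succ_eq (Nat.zero_le K), hv.1, one_pow]

theorem extProfile_one_le (hv : IsTwoChoiceProfile ρ K v) (hρ : ρ ≤ 1) :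
    extProfile K v 1 ≤ 1 - extProfile K v K ^ 2 := by
  have hK_le_one : extProfile K v K ≤ 1 := hv.1 ▸ hv.extProfile_antitone (Nat.zero_le K)
  rw [hv.extProfile_one_eq]
  exact mul_le_of_le_one_left (by nlinarith [hv.extProfile_nonneg K]) hρ

theorem one_sub_extProfile_one_le (hv : IsTwoChoiceProfile ρ K v) (hρ : ρ ≤ 1) :
    1 - extProfile K v 1 ≤ (1 - ρ) + extProfile K v K ^ 2 := by
  rw [hv.extProfile_one_eq]
  nlinarith [sq_nonneg (extProfile K v K)]

theorem extProfile_succ_le_sq (hv : IsTwoChoiceProfile ρ K v) (hρ : ρ ≤ 1) (k : ℕ) :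
    extProfile K v (k + 1) ≤ extProfile K v k ^ 2 := by
  by_cases hk : k ≤ K
  · have hK_le : extProfile K v K ≤ extProfile K v k := hv.extProfile_antitone hk
    have hK_nonneg := hv.extProfile_nonneg K
    rw [hv.extProfile_succ_eq hk]
    calc ρ * (extProfile K v k ^ 2 - extProfile K v K ^ 2)
        ≤ extProfile K v k ^ 2 - extProfile K v K ^ 2 :=
          mul_le_of_le_one_left (by nlinarith) hρ
      _ ≤ extProfile K v k ^ 2 := by nlinarith
  · simpa [extProfile, show ¬k + 1 < K + 1 by omega] using sq_nonneg (extProfile K v k)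

theorem extProfile_succ_le_pow (hv : IsTwoChoiceProfile ρ K v) (hρ : ρ ≤ 1) (k : ℕ) :
    extProfile K v (k + 1) ≤ extProfile K v 1 ^ 2 ^ k := by
  induction k with
  | zero => simp
  | succ k ih =>
    calc extProfile K v (k + 1 + 1) ≤ extProfile K v (k + 1) ^ 2 := hv.extProfile_succ_le_sq hρ _
      _ ≤ (extProfile K v 1 ^ 2 ^ k) ^ 2 := pow_le_pow_left₀ (hv.extProfile_nonneg _) ih 2
      _ = extProfile K v 1 ^ 2 ^ (k + 1) := by rw [← pow_mul, pow_succ]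

theorem extProfile_last_le_exp (hv : IsTwoChoiceProfile ρ K v) (hK : 1 ≤ K) (hρ : ρ ≤ 1) :
    extProfile K v K ≤ exp (-((2 : ℝ) ^ (K - 1) * extProfile K v K ^ 2)) := by
  set t := extProfile K v K
  calc t = extProfile K v (K - 1 + 1) := by rw [Nat.sub_add_cancel hK]
    _ ≤ extProfile K v 1 ^ 2 ^ (K - 1) := hv.extProfile_succ_le_pow hρ _
    _ ≤ exp (-t ^ 2) ^ 2 ^ (K - 1) := by
        refine pow_le_pow_left₀ (hv.extProfile_nonneg 1) ?_ _
        exact (hv.extProfile_one_le hρ).trans (one_sub_le_exp_neg _)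
    _ = exp (-((2 : ℝ) ^ (K - 1) * t ^ 2)) := by
        rw [← exp_nat_mul]
        push_cast
        ring_nf


theorem extProfile_last_le (hv : IsTwoChoiceProfile ρ K v) (hK : 1 ≤ K) (hρ : ρ ≤ 1) :
    extProfile K v K ≤ √K * (2 : ℝ) ^ (-(K : ℝ) / 2) := by
  set ε := (2 : ℝ) ^ (-(K : ℝ) / 2)
  have hε : 0 ≤ ε := by positivity
  refine le_of_le_exp_neg_mul_sq (hv.extProfile_last_le_exp hK hρ) (by positivity)
    (by positivity) ?_
  have hexp : (2 : ℝ) ^ (K - 1) * (√K * ε) ^ 2 = K / 2 := by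
    rw [mul_pow, sq_sqrt K.cast_nonneg, sq_two_rpow_neg_half]
    obtain ⟨m, rfl⟩ := Nat.exists_eq_add_of_le' hK
    field_simp
    simp [pow_succ]
  calc exp (-((2 : ℝ) ^ (K - 1) * (√K * ε) ^ 2)) = exp (-K / 2) := by rw [hexp, neg_div]
    _ ≤ ε := exp_neg_half_le_two_rpow_neg_half K.cast_nonneg
    _ ≤ √K * ε := le_mul_of_one_le_left hε (one_le_sqrt.mpr (by exact_mod_cast hK))

end IsTwoChoiceProfile

/-- for `ρ ∈ [1 − 2^{−K/2}, 1]`, the unique two-choice profile satisfies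
`P(ρ, K) = (1 − ν_{ρ,K}(1)) + ν_{ρ,K}(K) ≤ 4 √K · 2^{−K/2}`. -/
theorem problematic_bound_near_one (K : ℕ) (hK : 1 ≤ K) (ρ : ℝ)
    (hρ : ρ ∈ Set.Icc (1 - (2 : ℝ) ^ (-(K : ℝ) / 2)) 1)
    (v : Fin (K + 1) → ℝ) (hv : IsTwoChoiceProfile ρ K v) :
    (1 - extProfile K v 1) + extProfile K v K ≤
      4 * Real.sqrt K * (2 : ℝ) ^ (-(K : ℝ) / 2) := by
  obtain ⟨hρ_lower, hρ_upper⟩ := hρ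
  set ε := (2 : ℝ) ^ (-(K : ℝ) / 2)
  have hε : 0 ≤ ε := by positivity
  have hfirst := hv.one_sub_extProfile_one_le hρ_upper
  have hlast := hv.extProfile_last_le hK hρ_upper
  have hlast_nonneg := hv.extProfile_nonneg K
  have hsqrt_mul_le_one := sqrt_mul_two_rpow_neg_half_le_one K
  have hε_le : ε ≤ √K * ε := le_mul_of_one_le_left hε (one_le_sqrt.mpr (by exact_mod_cast hK))
  have hlast_sq : extProfile K v K ^ 2 ≤ √K * ε := by nlinarith
  linarith
end
end

section
/- Let K ≥ 1 be an integer. Then Σ_{k=1}^{K} ν_{1−2^{−K/2}, K}(k) ≤ K/2 and Σ_{k=1}^{K} ν_{1, K}(k) ≥ K − log₂ K − 3. -/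
open Finset Real

noncomputable section

/-!
Telescoping the defining relations (with `v_{K+1} = 0`) gives `v_{k+1} = ρ (v_k² - c)` for `c = v_K²`,
hence `v_{k+1} ≤ (ρ (1 - c))^{2^k}`. For `ρ = 1 - 2^{-K/2}` the sum is then at most
`∑_k ρ^{2^k} ≤ -log₂(1 - ρ) = K/2`, because `-log₂(1 - x) = ∑_k log₂(1 + x^{2^k})` and `y ≤ log₂(1 + y)`
on `[0, 1]`. For `ρ = 1` one has `v_k ≥ 1 - (2^k - 1) c`, while `c ≤ (1 - c)^{2^K} ≤ exp(-c 2^K)` forces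
`c 2^K ≤ K`; so the first `K - ⌊log₂ K⌋ - 2` terms add up to at least their number minus one.
The profile exists because the forward recursion `w_{n+1} = ρ (w_n² - c)`, `w_0 = 1`, has a parameter
`c ∈ [0, 1/2]` with `w_K(c)² = c`, by the intermediate value theorem.
-/

lemma le_logb_two_one_add {y : ℝ} (hy0 : 0 ≤ y) (hy1 : y ≤ 1) : y ≤ logb 2 (1 + y) := by
  rw [le_logb_iff_rpow_le one_lt_two (by linarith)]
  simpa [one_add_one_eq_two] using rpow_one_add_le_one_add_mul_self (s := 1) (by norm_num) hy0 hy1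

lemma sum_range_pow_two_pow_le_neg_logb {x : ℝ} (hx0 : 0 ≤ x) (hx1 : x < 1) (n : ℕ) :
    ∑ k ∈ range n, x ^ 2 ^ k ≤ -logb 2 (1 - x) := by
  have key : ∀ n, ∑ k ∈ range n, x ^ 2 ^ k ≤ logb 2 (1 - x ^ 2 ^ n) - logb 2 (1 - x) := by
    intro n
    induction n with
    | zero => simp
    | succ n ih =>
      have hy0 : 0 ≤ x ^ 2 ^ n := by positivity
      have hy1 : x ^ 2 ^ n < 1 := pow_lt_one₀ hx0 hx1 (by positivity)
      have hsplit :
          logb 2 (1 - x ^ 2 ^ (n + 1)) = logb 2 (1 - x ^ 2 ^ n) + logb 2 (1 + x ^ 2 ^ n) := by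
        rw [← logb_mul (by linarith) (by linarith)]
        ring_nf
      rw [sum_range_succ, hsplit]
      linarith [le_logb_two_one_add hy0 hy1.le]
  have htail : logb 2 (1 - x ^ 2 ^ n) ≤ 0 :=
    logb_nonpos one_lt_two (by linarith [pow_le_one₀ hx0 hx1.le (n := 2 ^ n)])
      (by linarith [pow_nonneg hx0 (2 ^ n)])
  linarith [key n]

lemma mul_le_log_of_le_one_sub_pow {c : ℝ} {N : ℕ} (hc1 : c ≤ 1) (hN : exp 1 ≤ N)
    (h : c ≤ (1 - c) ^ N) : c * N ≤ log N := by
  have hN0 : (0 : ℝ) < N := lt_of_lt_of_le (exp_pos 1) hN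
  have hlogN : 1 ≤ log N := (le_log_iff_exp_le hN0).2 hN
  by_contra! hlt
  have hpow : (1 - c) ^ N ≤ exp (-(c * N)) := by
    calc (1 - c) ^ N ≤ exp (-c) ^ N :=
          pow_le_pow_left₀ (by linarith) (by linarith [add_one_le_exp (-c)]) N
      _ = exp (-(c * N)) := by rw [← exp_nat_mul]; ring_nf
  have hexp : exp (-(c * N)) < (N : ℝ)⁻¹ := by
    calc exp (-(c * N)) < exp (-log N) := exp_lt_exp.2 (by linarith)
      _ = (N : ℝ)⁻¹ := by rw [exp_neg, exp_log hN0]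
  have : c * N < 1 := by
    have := mul_lt_mul_of_pos_right ((h.trans hpow).trans_lt hexp) hN0
    rwa [inv_mul_cancel₀ hN0.ne'] at this
  linarith

lemma extProfile_of_le {K k : ℕ} (v : Fin (K + 1) → ℝ) (hk : k ≤ K) :
    extProfile K v k = v ⟨k, Nat.lt_succ_of_le hk⟩ :=
  dif_pos _

@[simp]
lemma extProfile_succ_self (K : ℕ) (v : Fin (K + 1) → ℝ) : extProfile K v (K + 1) = 0 :=
  dif_neg (lt_irrefl _)

def twoChoiceSeq (ρ c : ℝ) : ℕ → ℝ
  | 0 => 1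
  | n + 1 => ρ * (twoChoiceSeq ρ c n ^ 2 - c)

namespace twoChoiceSeq

variable {ρ c : ℝ} {K : ℕ}

@[simp] lemma zero : twoChoiceSeq ρ c 0 = 1 := rfl

lemma succ (ρ c : ℝ) (n : ℕ) : twoChoiceSeq ρ c (n + 1) = ρ * (twoChoiceSeq ρ c n ^ 2 - c) := rfl

lemma continuous (ρ : ℝ) (n : ℕ) : Continuous fun c => twoChoiceSeq ρ c n := by
  induction n with
  | zero => exact continuous_const
  | succ n ih => exact continuous_const.mul ((ih.pow 2).sub continuous_id)

lemma sq_succ_half_le (hρ : ρ ^ 2 ≤ 1) (n : ℕ) : twoChoiceSeq ρ (1 / 2) (n + 1) ^ 2 ≤ 1 / 4 := by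
  induction n with
  | zero => rw [succ, zero]; nlinarith
  | succ n ih =>
    rw [succ]
    nlinarith [sq_nonneg (twoChoiceSeq ρ (1 / 2) (n + 1)), mul_le_mul_of_nonneg_right hρ
      (sq_nonneg (twoChoiceSeq ρ (1 / 2) (n + 1) ^ 2 - 1 / 2))]

lemma exists_sq_eq (hρ : ρ ^ 2 ≤ 1) (hK : 1 ≤ K) :
    ∃ c ∈ Set.Icc (0 : ℝ) (1 / 2), twoChoiceSeq ρ c K ^ 2 = c := by
  have hcont : ContinuousOn (fun c => twoChoiceSeq ρ c K ^ 2 - c) (Set.Icc 0 (1 / 2)) :=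
    (((continuous ρ K).pow 2).sub continuous_id).continuousOn
  have hhalf : twoChoiceSeq ρ (1 / 2) K ^ 2 ≤ 1 / 4 := by
    obtain ⟨n, rfl⟩ := Nat.exists_eq_add_of_le' hK
    exact sq_succ_half_le hρ n
  obtain ⟨c, hc, hfix⟩ := intermediate_value_Icc' (by norm_num) hcont
    (show (0 : ℝ) ∈ Set.Icc _ _ from
      ⟨by linarith, by linarith [sq_nonneg (twoChoiceSeq ρ 0 K)]⟩)
  exact ⟨c, hc, sub_eq_zero.1 hfix⟩

-- Once `w_j² < c ≤ 1/2`, the sequence stays trapped: `(ρ (w² - c))² ≤ (c - w²)² ≤ c² < c`.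
lemma le_sq_of_sq_eq (hρ : ρ ^ 2 ≤ 1) (hc : c ≤ 1 / 2) (hfix : twoChoiceSeq ρ c K ^ 2 = c)
    {j : ℕ} (hj : j ≤ K) : c ≤ twoChoiceSeq ρ c j ^ 2 := by
  by_contra! hlt
  have trapped : ∀ i, j ≤ i → twoChoiceSeq ρ c i ^ 2 < c := by
    intro i hi
    induction i, hi using Nat.le_induction with
    | base => exact hlt
    | succ i _ ih =>
      have hpos : 0 < c := lt_of_le_of_lt (sq_nonneg _) ih
      rw [succ, mul_pow]
      nlinarith [mul_le_mul_of_nonneg_right hρ (sq_nonneg (twoChoiceSeq ρ c i ^ 2 - c)),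
        sq_nonneg (twoChoiceSeq ρ c i)]
  exact (trapped K hj).ne hfix

variable (hρ0 : 0 ≤ ρ) (hρ1 : ρ ≤ 1) (hc : c ≤ 1 / 2) (hfix : twoChoiceSeq ρ c K ^ 2 = c)
include hρ0 hρ1 hc hfix

lemma nonneg {j : ℕ} (hj : j ≤ K) : 0 ≤ twoChoiceSeq ρ c j := by
  cases j with
  | zero => exact zero_le_one
  | succ i =>
    have := le_sq_of_sq_eq (by nlinarith) hc hfix (j := i) (by omega)
    rw [succ]
    exact mul_nonneg hρ0 (by linarith)

lemma succ_le {k : ℕ} (hk : k < K) : twoChoiceSeq ρ c (k + 1) ≤ twoChoiceSeq ρ c k := by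
  induction k with
  | zero =>
    have hc0 : 0 ≤ c := hfix ▸ sq_nonneg _
    rw [succ, zero]
    nlinarith
  | succ k ih =>
    have h0 := nonneg hρ0 hρ1 hc hfix (j := k + 1) (by omega)
    rw [succ ρ c (k + 1)]
    linarith [succ ρ c k, mul_le_mul_of_nonneg_left (pow_le_pow_left₀ h0 (ih (by omega)) 2) hρ0]

end twoChoiceSeq

lemma isTwoChoiceProfile_twoChoiceSeq {ρ c : ℝ} {K : ℕ} (hρ0 : 0 ≤ ρ) (hρ1 : ρ ≤ 1)
    (hc : c ≤ 1 / 2) (hfix : twoChoiceSeq ρ c K ^ 2 = c) :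
    IsTwoChoiceProfile ρ K fun i => twoChoiceSeq ρ c i := by
  have hext : ∀ k ≤ K, extProfile K (fun i => twoChoiceSeq ρ c i) k = twoChoiceSeq ρ c k :=
    fun k hk => extProfile_of_le _ hk
  refine ⟨hext 0 (Nat.zero_le K), fun k hk => ?_, ?_, fun k hk1 hkK => ?_⟩
  · rw [hext k hk.le, hext (k + 1) hk]
    exact twoChoiceSeq.succ_le hρ0 hρ1 hc hfix hk
  · rw [hext K le_rfl]
    exact twoChoiceSeq.nonneg hρ0 hρ1 hc hfix le_rfl
  · obtain ⟨j, rfl⟩ := Nat.exists_eq_add_of_le' hk1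
    rw [Nat.add_sub_cancel, hext j (by omega), hext (j + 1) hkK]
    rcases hkK.lt_or_eq with hlt | rfl
    · rw [hext (j + 1 + 1) hlt]
      linear_combination twoChoiceSeq.succ ρ c j - twoChoiceSeq.succ ρ c (j + 1)
    · rw [extProfile_succ_self]
      linear_combination twoChoiceSeq.succ ρ c j + ρ * hfix

lemma exists_isTwoChoiceProfile {ρ : ℝ} (hρ0 : 0 ≤ ρ) (hρ1 : ρ ≤ 1) (K : ℕ) :
    ∃ v, IsTwoChoiceProfile ρ K v := by
  rcases Nat.eq_zero_or_pos K with rfl | hK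
  · exact ⟨fun _ => 1, rfl, by simp, zero_le_one, by omega⟩
  obtain ⟨c, hc, hfix⟩ := twoChoiceSeq.exists_sq_eq (ρ := ρ) (by nlinarith) hK
  exact ⟨_, isTwoChoiceProfile_twoChoiceSeq hρ0 hρ1 hc.2 hfix⟩

lemma isTwoChoiceProfile_nu {ρ : ℝ} (hρ0 : 0 ≤ ρ) (hρ1 : ρ ≤ 1) (K : ℕ) :
    IsTwoChoiceProfile ρ K (nu ρ K) :=
  Classical.epsilon_spec (exists_isTwoChoiceProfile hρ0 hρ1 K)

namespace IsTwoChoiceProfile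

section

variable {ρ : ℝ} {K : ℕ} {v : Fin (K + 1) → ℝ} (hv : IsTwoChoiceProfile ρ K v)
include hv

lemma le_of_le {i j : ℕ} (hij : i ≤ j) (hj : j ≤ K) : extProfile K v j ≤ extProfile K v i := by
  induction j, hij using Nat.le_induction with
  | base => exact le_rfl
  | succ j _ ih => exact (hv.2.1 j hj).trans (ih (by omega))

lemma nonneg {j : ℕ} (hj : j ≤ K) : 0 ≤ extProfile K v j :=
  hv.2.2.1.trans (hv.le_of_le hj le_rfl)

lemma le_one {j : ℕ} (hj : j ≤ K) : extProfile K v j ≤ 1 :=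
  hv.1 ▸ hv.le_of_le (Nat.zero_le j) hj

lemma succ_eq {k : ℕ} (hk : k < K) :
    extProfile K v (k + 1) = ρ * (extProfile K v k ^ 2 - extProfile K v K ^ 2) := by
  obtain ⟨d, hd⟩ := Nat.exists_eq_add_of_lt hk
  induction d generalizing k with
  | zero =>
    have hK : K = k + 1 := hd
    have h := hv.2.2.2 (k + 1) (by omega) hK.ge
    rw [Nat.add_sub_cancel, ← hK, extProfile_succ_self] at h
    rw [← hK]
    linarith
  | succ d ih =>
    have h := hv.2.2.2 (k + 1) (by omega) (by omega)
    rw [Nat.add_sub_cancel] at h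
    linear_combination h + ih (k := k + 1) (by omega) (by omega)

lemma succ_le_pow (hρ0 : 0 ≤ ρ) (hρ1 : ρ ≤ 1) {k : ℕ} (hk : k < K) :
    extProfile K v (k + 1) ≤ (ρ * (1 - extProfile K v K ^ 2)) ^ 2 ^ k := by
  induction k with
  | zero => rw [hv.succ_eq hk, hv.1]; simp
  | succ k ih =>
    have hv0 := hv.nonneg (j := k + 1) hk.le
    calc extProfile K v (k + 1 + 1) ≤ extProfile K v (k + 1) ^ 2 := by
          rw [hv.succ_eq hk]
          nlinarith [sq_nonneg (extProfile K v (k + 1)), sq_nonneg (extProfile K v K)]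
      _ ≤ ((ρ * (1 - extProfile K v K ^ 2)) ^ 2 ^ k) ^ 2 := pow_le_pow_left₀ hv0 (ih (by omega)) 2
      _ = (ρ * (1 - extProfile K v K ^ 2)) ^ 2 ^ (k + 1) := by rw [← pow_mul, ← pow_succ]

lemma sum_le_neg_logb (hρ0 : 0 ≤ ρ) (hρ1 : ρ < 1) :
    ∑ k ∈ Icc 1 K, extProfile K v k ≤ -logb 2 (1 - ρ) := by
  have hterm : ∀ k ∈ range K, extProfile K v (k + 1) ≤ ρ ^ 2 ^ k := fun k hk =>
    (hv.succ_le_pow hρ0 hρ1.le (mem_range.1 hk)).trans <| pow_le_pow_left₀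
      (mul_nonneg hρ0 (by nlinarith [hv.nonneg le_rfl, hv.le_one le_rfl]))
      (mul_le_of_le_one_right hρ0 (by nlinarith)) _
  calc ∑ k ∈ Icc 1 K, extProfile K v k = ∑ k ∈ range K, extProfile K v (k + 1) := by
        rw [range_eq_Ico, sum_Ico_add' _ 0 K 1]; rfl
    _ ≤ ∑ k ∈ range K, ρ ^ 2 ^ k := sum_le_sum hterm
    _ ≤ -logb 2 (1 - ρ) := sum_range_pow_two_pow_le_neg_logb hρ0 hρ1 K

end

section

variable {K : ℕ} {v : Fin (K + 1) → ℝ} (hv : IsTwoChoiceProfile 1 K v)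
include hv

-- From `v_{k+1} = v_k² - v_K² ≥ 2 v_k - 1 - v_K²`.
lemma one_sub_mul_le {k : ℕ} (hk : k ≤ K) :
    1 - (2 ^ k - 1) * extProfile K v K ^ 2 ≤ extProfile K v k := by
  induction k with
  | zero => simp [hv.1]
  | succ k ih =>
    rw [hv.succ_eq hk, pow_succ]
    nlinarith [ih (by omega), sq_nonneg (extProfile K v k - 1)]

lemma sub_mul_le_sum {m : ℕ} (hm : m ≤ K) :
    m - 2 ^ (m + 1) * extProfile K v K ^ 2 ≤ ∑ k ∈ Icc 1 K, extProfile K v k := by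
  have hprefix : ∀ n ≤ K,
      n - 2 ^ (n + 1) * extProfile K v K ^ 2 ≤ ∑ k ∈ Icc 1 n, extProfile K v k := by
    intro n hn
    induction n with
    | zero => simp [sq_nonneg]
    | succ n ih =>
      rw [sum_Icc_succ_top (by omega), pow_succ]
      push_cast
      nlinarith [ih (by omega), hv.one_sub_mul_le hn, sq_nonneg (extProfile K v K)]
  exact (hprefix m hm).trans <| sum_le_sum_of_subset_of_nonneg (Icc_subset_Icc_right hm)
    fun k hk _ => hv.nonneg (mem_Icc.1 hk).2

lemma sq_mul_two_pow_le (hK : 2 ≤ K) : extProfile K v K ^ 2 * 2 ^ K ≤ K := by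
  set c := extProfile K v K ^ 2
  have hdecay : c ≤ (1 - c) ^ 2 ^ K := by
    obtain ⟨k, rfl⟩ := Nat.exists_eq_add_of_le' (by omega : 1 ≤ K)
    have h := hv.succ_le_pow zero_le_one le_rfl (Nat.lt_succ_self k)
    rw [one_mul] at h
    calc c ≤ ((1 - c) ^ 2 ^ k) ^ 2 := pow_le_pow_left₀ (hv.nonneg le_rfl) h 2
      _ = (1 - c) ^ 2 ^ (k + 1) := by rw [← pow_mul, ← pow_succ]
  have hexp : exp 1 ≤ ((2 ^ K : ℕ) : ℝ) := by
    have : (4 : ℝ) ≤ 2 ^ K := by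
      calc (4 : ℝ) = 2 ^ 2 := by norm_num
        _ ≤ 2 ^ K := pow_le_pow_right₀ one_le_two hK
    push_cast
    linarith [exp_one_lt_d9]
  have hc1 : c ≤ 1 := by nlinarith [hv.le_one (le_refl K), hv.nonneg (le_refl K)]
  have := mul_le_log_of_le_one_sub_pow hc1 hexp (by exact_mod_cast hdecay)
  push_cast at this
  rw [log_pow] at this
  nlinarith [log_two_lt_d9]

lemma sub_logb_sub_three_le_sum : K - logb 2 K - 3 ≤ ∑ k ∈ Icc 1 K, extProfile K v k := by
  set L := Nat.log 2 K
  have hL : (L : ℝ) ≤ logb 2 K := by exact_mod_cast natLog_le_logb K 2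
  rcases lt_or_ge K (L + 2) with hKL | hLK
  · have : (K : ℝ) < L + 2 := by exact_mod_cast hKL
    linarith [sum_nonneg fun k (hk : k ∈ Icc 1 K) => hv.nonneg (mem_Icc.1 hk).2]
  · obtain ⟨m, hm⟩ : ∃ m, K = m + (L + 2) := ⟨K - (L + 2), by omega⟩
    have hK2 : (K : ℝ) < 2 ^ (L + 1) := by exact_mod_cast Nat.lt_pow_succ_log_self one_lt_two K
    have hsplit : (2 : ℝ) ^ (m + 1) * 2 ^ (L + 1) = 2 ^ K := by rw [← pow_add, hm]; ring_nf
    have hsmall : 2 ^ (m + 1) * extProfile K v K ^ 2 ≤ 1 := by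
      nlinarith [hv.sq_mul_two_pow_le (by omega)]
    have hKm : (K : ℝ) = m + L + 2 := by rw [hm]; push_cast; ring
    linarith [hv.sub_mul_le_sum (m := m) (by omega)]

end

end IsTwoChoiceProfile

theorem sum_nu_bounds_general (K : ℕ) :
    (∑ k ∈ Finset.Icc 1 K, nuV (1 - (2 : ℝ) ^ (-(K : ℝ) / 2)) K k ≤ (K : ℝ) / 2) ∧
    ((K : ℝ) - Real.logb 2 K - 3 ≤ ∑ k ∈ Finset.Icc 1 K, nuV 1 K k) := by
  refine ⟨?_, (isTwoChoiceProfile_nu zero_le_one le_rfl K).sub_logb_sub_three_le_sum⟩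
  have hε0 : 0 < (2 : ℝ) ^ (-(K : ℝ) / 2) := by positivity
  have hε1 : (2 : ℝ) ^ (-(K : ℝ) / 2) ≤ 1 :=
    rpow_le_one_of_one_le_of_nonpos one_le_two (by have := K.cast_nonneg (α := ℝ); linarith)
  calc _ ≤ -logb 2 (1 - (1 - (2 : ℝ) ^ (-(K : ℝ) / 2))) :=
        (isTwoChoiceProfile_nu (by linarith) (by linarith) K).sum_le_neg_logb
          (by linarith) (by linarith)
    _ = K / 2 := by rw [sub_sub_cancel, logb_rpow two_pos (by norm_num)]; ring

/-- `Σ_{k=1}^K ν_{1−2^{−K/2},K}(k) ≤ K/2` and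
`Σ_{k=1}^K ν_{1,K}(k) ≥ K − log₂ K − 3`. -/
theorem sum_nu_bounds (K : ℕ) (hK : 1 ≤ K) :
    (∑ k ∈ Finset.Icc 1 K, nuV (1 - (2 : ℝ) ^ (-(K : ℝ) / 2)) K k ≤ (K : ℝ) / 2) ∧
    ((K : ℝ) - Real.logb 2 K - 3 ≤ ∑ k ∈ Finset.Icc 1 K, nuV 1 K k) :=
  sum_nu_bounds_general K
end
end
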